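/- For any m×M real matrix Φ with unit norm columns, the frame potential FP(Φ) = Σ_{i,j} |⟨φᵢ, φⱼ⟩|² = ‖ΦᵀΦ‖_F² satisfies FP(Φ) ≥ M²/m, with equality if and only if Φ is a unit norm tight frame (i.e., ΦΦᵀ = (M/m)·I_m). -/

import Mathlib

open Matrix BigOperators Finset

/-! The frame potential is `‖ΦᵀΦ‖_F² = tr ((ΦᵀΦ)²) = ‖ΦΦᵀ‖_F²`, and the frame operator
`S = ΦΦᵀ` has trace `M` since the columns are unit vectors. Expanding
`‖S - (tr S / m) • 1‖_F² ≥ 0` gives `‖S‖_F² ≥ (tr S)² / m`, with equality exactly when `S` is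
a multiple of the identity. -/

namespace Matrix

variable {m n R : Type*} [Fintype m] [Fintype n]

theorem sum_sq_eq_trace_mul_transpose [Semiring R] (B : Matrix m n R) :
    ∑ i, ∑ j, B i j ^ 2 = trace (B * Bᵀ) := by
  simp only [trace, diag_apply, mul_apply, transpose_apply, sq]

theorem sum_sq_transpose_mul_self [CommSemiring R] (A : Matrix m n R) :
    ∑ i, ∑ j, (Aᵀ * A) i j ^ 2 = ∑ k, ∑ l, (A * Aᵀ) k l ^ 2 := by
  simp only [sum_sq_eq_trace_mul_transpose, transpose_mul, transpose_transpose]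
  rw [← Matrix.mul_assoc, Matrix.mul_assoc Aᵀ, trace_mul_comm, Matrix.mul_assoc]

theorem sum_sq_sub_smul_one [CommRing R] [DecidableEq n] (S : Matrix n n R) (c : R) :
    ∑ i, ∑ j, (S - c • 1) i j ^ 2
      = ∑ i, ∑ j, S i j ^ 2 - 2 * c * trace S + c ^ 2 * Fintype.card n := by
  have hexpand : ∀ i j, (S - c • 1) i j ^ 2
      = S i j ^ 2 - 2 * c * (if i = j then S i j else 0) + (if i = j then c ^ 2 else 0) := by
    intro i j
    by_cases h : i = j
    · subst h; simp; ring
    · simp [h]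
  simp only [hexpand, sum_add_distrib, sum_sub_distrib, ← mul_sum, sum_ite_eq, mem_univ,
    if_true, sum_const, card_univ, nsmul_eq_mul, trace, diag_apply]
  ring

variable [DecidableEq n] [Nonempty n]

theorem sum_sq_sub_trace_div_card_smul_one [Field R] [CharZero R] (S : Matrix n n R) :
    ∑ i, ∑ j, (S - (trace S / Fintype.card n) • 1) i j ^ 2
      = ∑ i, ∑ j, S i j ^ 2 - trace S ^ 2 / Fintype.card n := by
  have hcard : (Fintype.card n : R) ≠ 0 := Nat.cast_ne_zero.mpr Fintype.card_ne_zero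
  rw [sum_sq_sub_smul_one]
  field_simp
  ring

theorem trace_sq_div_card_le_sum_sq [Field R] [LinearOrder R] [IsStrictOrderedRing R]
    (S : Matrix n n R) :
    trace S ^ 2 / Fintype.card n ≤ ∑ i, ∑ j, S i j ^ 2 := by
  have hdev := sum_sq_sub_trace_div_card_smul_one S
  have hdev_nonneg : 0 ≤ ∑ i, ∑ j, (S - (trace S / Fintype.card n) • 1) i j ^ 2 := by positivity
  linarith

theorem sum_sq_eq_trace_sq_div_card_iff [Field R] [LinearOrder R] [IsStrictOrderedRing R]
    (S : Matrix n n R) :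
    ∑ i, ∑ j, S i j ^ 2 = trace S ^ 2 / Fintype.card n ↔ S = (trace S / Fintype.card n) • 1 := by
  rw [← sub_eq_zero, ← sub_eq_zero (a := S), ← sum_sq_sub_trace_div_card_smul_one,
    sum_eq_zero_iff_of_nonneg fun _ _ => by positivity]
  simp only [mem_univ, forall_const, sum_eq_zero_iff_of_nonneg fun _ _ => sq_nonneg _,
    pow_eq_zero_iff two_ne_zero]
  exact Matrix.ext_iff

end Matrix

theorem frame_potential_bound_general {m M : ℕ} (hm : 0 < m)
    (Φ : Matrix (Fin m) (Fin M) ℝ)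
    (hunit : ∀ i, ∑ k, Φ k i * Φ k i = 1) :
    ((M : ℝ) ^ 2 / m ≤ ∑ i : Fin M, ∑ j : Fin M, (∑ k, Φ k i * Φ k j) ^ 2) ∧
    ((∑ i : Fin M, ∑ j : Fin M, (∑ k, Φ k i * Φ k j) ^ 2 = (M : ℝ) ^ 2 / m) ↔
      Φ * Φᵀ = ((M : ℝ) / m) • (1 : Matrix (Fin m) (Fin m) ℝ)) := by
  have : Nonempty (Fin m) := ⟨⟨0, hm⟩⟩
  have hFP : ∑ i : Fin M, ∑ j : Fin M, (∑ k, Φ k i * Φ k j) ^ 2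
      = ∑ k, ∑ l, (Φ * Φᵀ) k l ^ 2 :=
    sum_sq_transpose_mul_self Φ
  have htrace : trace (Φ * Φᵀ) = M := by
    rw [trace_mul_comm]
    simp [trace, mul_apply, hunit]
  have hbound := trace_sq_div_card_le_sum_sq (Φ * Φᵀ)
  have hequality := sum_sq_eq_trace_sq_div_card_iff (Φ * Φᵀ)
  rw [htrace, Fintype.card_fin] at hbound hequality
  rw [hFP]
  exact ⟨hbound, hequality⟩

/-- Frame potential bound: `FP(Φ) ≥ M²/m`, with equality iff `Φ` is a unit norm
tight frame. -/
theorem frame_potential_bound {m M : ℕ} (hm : 0 < m) (hmM : m ≤ M)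
    (Φ : Matrix (Fin m) (Fin M) ℝ)
    (hunit : ∀ i, ∑ k, Φ k i * Φ k i = 1) :
    ((M : ℝ) ^ 2 / m ≤ ∑ i : Fin M, ∑ j : Fin M, (∑ k, Φ k i * Φ k j) ^ 2) ∧
    ((∑ i : Fin M, ∑ j : Fin M, (∑ k, Φ k i * Φ k j) ^ 2 = (M : ℝ) ^ 2 / m) ↔
      Φ * Φᵀ = ((M : ℝ) / m) • (1 : Matrix (Fin m) (Fin m) ℝ)) :=
  frame_potential_bound_general hm Φ hunit
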